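/- arXiv:1605.00473 — 4 statements merged into one kernel-verified Lean document; each statement's English description precedes it below -/
import Mathlib

section
/- Let G be a Polish group acting continuously and by isometries on a Polish bounded metric space (X,d) having at least two points, and suppose the action is faithful, i.e. the induced homomorphism G → Iso(X) is a topological embedding. Let (g_n) be a sequence of Borel measurable maps g_n : Ω → G and (t_n) a sequence of invertible measure-preserving transformations of Ω. If for every Borel measurable r : Ω → X one has ∫ d(g_n(ω)•r(t_n⁻¹(ω)), r(ω)) dμ(ω) → 0 as n → ∞, then: (i) for every x ∈ X, ∫ d(g_n(ω)•x, x) dμ(ω) → 0; and (ii) for every Borel set A ⊆ Ω, μ(t_n⁻¹(A) Δ A) → 0. -/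
/-!
Part (i) is the hypothesis applied to constant random variables. For part (ii), pick two distinct
points `x ≠ y` and let `r` be `x` on `A` and `y` off `A`. Then `d(r(t⁻¹ω), r(ω))` is `d(x, y)` on
`t(A) Δ A` and `0` elsewhere, while by the triangle inequality it is at most
`d(gₙ(ω)•r(t⁻¹ω), r(ω)) + d(gₙ(ω)•x, x) + d(gₙ(ω)•y, y)`. All three integrals tend to `0`,
hence so does `d(x, y) · μ(t(A) Δ A)`, and `t` preserves `μ`.
-/

open MeasureTheory Filter Topology

/-- `Ω` is the unit interval equipped with Lebesgue measure. -/
abbrev Ω : Type := Set.Icc (0 : ℝ) 1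

open scoped symmDiff

lemma dist_piecewise_comp_eq_indicator {α X : Type*} [PseudoMetricSpace X] (s : α → α)
    (A : Set α) [DecidablePred (· ∈ A)] (x y : X) (ω : α) :
    dist (A.piecewise (fun _ => x) (fun _ => y) (s ω)) (A.piecewise (fun _ => x) (fun _ => y) ω)
      = ((s ⁻¹' A) ∆ A).indicator (fun _ => dist x y) ω := by
  by_cases h₁ : s ω ∈ A <;> by_cases h₂ : ω ∈ A <;>
    simp [Set.indicator, Set.mem_symmDiff, h₁, h₂, dist_comm]

lemma dist_smul_self_le_of_mem_pair {G X : Type*} [PseudoMetricSpace X] [SMul G X] (c : G)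
    {x y z : X} (hz : z = x ∨ z = y) :
    dist z (c • z) ≤ dist (c • x) x + dist (c • y) y := by
  rcases hz with rfl | rfl
  · rw [dist_comm]
    exact le_add_of_nonneg_right dist_nonneg
  · rw [dist_comm]
    exact le_add_of_nonneg_left dist_nonneg

section TwoPoint

variable {α X : Type*} [MeasurableSpace α] {μ : Measure α} [PseudoMetricSpace X]

lemma integrable_dist_of_boundedSpace [MeasurableSpace X] [OpensMeasurableSpace X]
    [SecondCountableTopology X] [BoundedSpace X] [IsFiniteMeasure μ] {f f' : α → X}
    (hf : Measurable f) (hf' : Measurable f') :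
    Integrable (fun ω => dist (f ω) (f' ω)) μ := by
  obtain ⟨C, hC⟩ := Metric.isBounded_iff.1 (Bornology.IsBounded.all (Set.univ : Set X))
  refine Integrable.of_bound (hf.dist hf').aestronglyMeasurable C (ae_of_all _ fun ω => ?_)
  rw [Real.norm_of_nonneg dist_nonneg]
  exact hC trivial trivial

lemma integral_dist_piecewise_comp {s : α → α} (hs : Measurable s) {A : Set α}
    [DecidablePred (· ∈ A)] (hA : MeasurableSet A) (x y : X) :
    ∫ ω, dist (A.piecewise (fun _ => x) (fun _ => y) (s ω))
        (A.piecewise (fun _ => x) (fun _ => y) ω) ∂μ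
      = μ.real ((s ⁻¹' A) ∆ A) * dist x y := by
  simp_rw [dist_piecewise_comp_eq_indicator]
  exact integral_indicator_const _ ((hs hA).symmDiff hA)

variable {G : Type*} [MeasurableSpace X] [OpensMeasurableSpace X] [SecondCountableTopology X]
  [BoundedSpace X] [IsFiniteMeasure μ] [SMul G X] [MeasurableSpace G] [MeasurableSMul₂ G X]

lemma measureReal_preimage_symmDiff_mul_dist_le {g : α → G} (hg : Measurable g)
    {s : α → α} (hs : Measurable s) {A : Set α} [DecidablePred (· ∈ A)] (hA : MeasurableSet A)
    (x y : X) :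
    μ.real ((s ⁻¹' A) ∆ A) * dist x y ≤
      ∫ ω, dist (g ω • A.piecewise (fun _ => x) (fun _ => y) (s ω))
        (A.piecewise (fun _ => x) (fun _ => y) ω) ∂μ
      + ∫ ω, dist (g ω • x) x ∂μ + ∫ ω, dist (g ω • y) y ∂μ := by
  set r : α → X := A.piecewise (fun _ => x) (fun _ => y)
  have hr : Measurable r := measurable_const.piecewise hA measurable_const
  have hdisp : ∀ {f : α → X}, Measurable f →
      Integrable (fun ω => dist (g ω • f ω) (r ω)) μ := fun hf =>
    integrable_dist_of_boundedSpace (hg.smul hf) hr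
  have hdisp_const : ∀ z : X, Integrable (fun ω => dist (g ω • z) z) μ := fun _ =>
    integrable_dist_of_boundedSpace (hg.smul measurable_const) measurable_const
  have hpointwise : ∀ ω, dist (r (s ω)) (r ω) ≤
      dist (g ω • r (s ω)) (r ω) + dist (g ω • x) x + dist (g ω • y) y := fun ω => by
    have hmem : r (s ω) = x ∨ r (s ω) = y := by
      by_cases h : s ω ∈ A
      · exact .inl (Set.piecewise_eq_of_mem _ _ _ h)
      · exact .inr (Set.piecewise_eq_of_notMem _ _ _ h)
    linarith [dist_triangle (r (s ω)) (g ω • r (s ω)) (r ω),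
      dist_smul_self_le_of_mem_pair (g ω) hmem]
  have hdisp_comp := hdisp (f := fun ω => r (s ω)) (hr.comp hs)
  calc μ.real ((s ⁻¹' A) ∆ A) * dist x y = ∫ ω, dist (r (s ω)) (r ω) ∂μ :=
        (integral_dist_piecewise_comp hs hA x y).symm
    _ ≤ ∫ ω, (dist (g ω • r (s ω)) (r ω) + dist (g ω • x) x + dist (g ω • y) y) ∂μ :=
        integral_mono (integrable_dist_of_boundedSpace (hr.comp hs) hr)
          ((hdisp_comp.add (hdisp_const x)).add (hdisp_const y)) hpointwise
    _ = _ := by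
        rw [integral_add _ (hdisp_const y), integral_add hdisp_comp (hdisp_const x)]
        exact hdisp_comp.add (hdisp_const x)

lemma tendsto_measureReal_preimage_symmDiff {g : ℕ → α → G} (hg : ∀ n, Measurable (g n))
    {s : ℕ → α → α} (hs : ∀ n, Measurable (s n)) {A : Set α} [DecidablePred (· ∈ A)]
    (hA : MeasurableSet A) {x y : X} (hxy : 0 < dist x y)
    (hr : Tendsto (fun n => ∫ ω, dist (g n ω • A.piecewise (fun _ => x) (fun _ => y) (s n ω))
      (A.piecewise (fun _ => x) (fun _ => y) ω) ∂μ) atTop (𝓝 0))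
    (hx : Tendsto (fun n => ∫ ω, dist (g n ω • x) x ∂μ) atTop (𝓝 0))
    (hy : Tendsto (fun n => ∫ ω, dist (g n ω • y) y ∂μ) atTop (𝓝 0)) :
    Tendsto (fun n => μ.real ((s n ⁻¹' A) ∆ A)) atTop (𝓝 0) := by
  have hsum := ((hr.add hx).add hy).div_const (dist x y)
  rw [add_zero, add_zero, zero_div] at hsum
  refine squeeze_zero (fun n => measureReal_nonneg) (fun n => ?_) hsum
  rw [le_div_iff₀ hxy]
  exact measureReal_preimage_symmDiff_mul_dist_le (hg n) (hs n) hA x y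

end TwoPoint

lemma MeasureTheory.MeasurePreserving.measure_preimage_symmDiff_symm {α : Type*}
    [MeasurableSpace α] {μ : Measure α} {t : α ≃ᵐ α} (ht : MeasurePreserving t μ μ)
    {A : Set α} (hA : MeasurableSet A) :
    μ ((t ⁻¹' A) ∆ A) = μ ((t.symm ⁻¹' A) ∆ A) := by
  rw [← ht.symm.measure_preimage ((t.measurable hA).symmDiff hA).nullMeasurableSet,
    Set.preimage_symmDiff, t.symm_preimage_preimage, symmDiff_comm]

theorem stmt_0_general
    (G : Type) [Group G] [TopologicalSpace G]
    [MeasurableSpace G] [BorelSpace G]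
    (X : Type) [MetricSpace X] [PolishSpace X] [BoundedSpace X]
    [MeasurableSpace X] [BorelSpace X]
    [MulAction G X] [ContinuousSMul G X]
    (htwo : ∃ x y : X, x ≠ y)
    (g : ℕ → Ω → G) (hg : ∀ n, Measurable (g n))
    (t : ℕ → Ω ≃ᵐ Ω) (ht : ∀ n, MeasurePreserving (t n) volume volume)
    (hconv : ∀ r : Ω → X, Measurable r →
      Tendsto (fun n => ∫ ω, dist (g n ω • r ((t n).symm ω)) (r ω) ∂volume) atTop (𝓝 0)) :
    (∀ x : X,
      Tendsto (fun n => ∫ ω, dist (g n ω • x) x ∂volume) atTop (𝓝 0)) ∧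
    (∀ A : Set Ω, MeasurableSet A →
      Tendsto (fun n => volume (symmDiff (⇑(t n) ⁻¹' A) A)) atTop (𝓝 0)) := by
  refine ⟨fun x => hconv _ measurable_const, fun A hA => ?_⟩
  classical
  obtain ⟨x, y, hxy⟩ := htwo
  have hsymm := tendsto_measureReal_preimage_symmDiff hg (fun n => (t n).symm.measurable) hA
    (dist_pos.2 hxy) (hconv _ (measurable_const.piecewise hA measurable_const))
    (hconv _ measurable_const) (hconv _ measurable_const)
  simp_rw [(ht _).measure_preimage_symmDiff_symm hA]
  exact (ENNReal.tendsto_toReal_zero_iff fun _ => measure_ne_top _ _).1 hsymm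

/-- If a Polish group `G` acts continuously, isometrically and faithfully on a Polish bounded
metric space `X` with at least two points, and `(gₙ, tₙ)` is a sequence in the measurable wreath
product `G ≀ Ω` converging to the identity in its action on `L⁰(Ω, X)` (i.e. the displacement
integrals of all random variables tend to `0`), then `gₙ → 1` pointwise in measure and `tₙ → 1`
in the weak topology of `Aut(Ω)`. -/
theorem stmt_0
    (G : Type) [Group G] [TopologicalSpace G] [IsTopologicalGroup G] [PolishSpace G]
    [MeasurableSpace G] [BorelSpace G]
    (X : Type) [MetricSpace X] [PolishSpace X] [BoundedSpace X]
    [MeasurableSpace X] [BorelSpace X]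
    [MulAction G X] [ContinuousSMul G X]
    (htwo : ∃ x y : X, x ≠ y)
    (hfaithful : Function.Injective (fun (g : G) => fun (x : X) => g • x) ∧
      Topology.IsInducing (fun (g : G) => fun (x : X) => g • x))
    (g : ℕ → Ω → G) (hg : ∀ n, Measurable (g n))
    (t : ℕ → Ω ≃ᵐ Ω) (ht : ∀ n, MeasurePreserving (t n) volume volume)
    (hconv : ∀ r : Ω → X, Measurable r →
      Tendsto (fun n => ∫ ω, dist (g n ω • r ((t n).symm ω)) (r ω) ∂volume) atTop (𝓝 0)) :
    (∀ x : X,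
      Tendsto (fun n => ∫ ω, dist (g n ω • x) x ∂volume) atTop (𝓝 0)) ∧
    (∀ A : Set Ω, MeasurableSet A →
      Tendsto (fun n => volume (symmDiff (⇑(t n) ⁻¹' A) A)) atTop (𝓝 0)) :=
  stmt_0_general G X htwo g hg t ht hconv
end

section
/- Let G be a group acting by isometries on a Polish metric space (X,d). Then there exists a Borel measurable map σ : X → X such that for every x ∈ X, σ(x) belongs to the closure of the orbit G•x, and such that σ(x) = σ(y) whenever the closures of the orbits G•x and G•y coincide. (Equivalently: the quotient map from X onto the space of orbit closures admits a Borel selector.) -/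
/-!
Since the action is continuous, `{x | closure (G • x) ∩ U ≠ ∅} = ⋃ g, g⁻¹ • U` is open for
every open `U`, so `x ↦ closure (G • x)` is Effros measurable. The Kuratowski–Ryll-Nardzewski
argument then selects a point of each nonempty closed set `S` of the (completely metrized) space
as the limit of points `u nₖ` of a fixed dense sequence, where `nₖ` is the least index with
`infDist (u nₖ) S < 2⁻ᵏ` and `dist (u nₖ) (u nₖ₋₁) < infDist (u nₖ₋₁) S + 2⁻ᵏ`; the second
condition makes the sequence Cauchy. Each `nₖ` depends only on `S` and on countably many
measurable conditions, so the selector `x ↦ sel (closure (G • x))` is Borel and constant on the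
fibres of `x ↦ closure (G • x)`.
-/

open MeasureTheory Metric MulAction Filter Topology Set

section Metric

variable {X : Type*} [MetricSpace X] {u : ℕ → X}

theorem DenseRange.exists_infDist_lt_and_dist_lt (hu : DenseRange u) {S : Set X}
    (hS : S.Nonempty) (y : X) {r : ℝ} (hr : 0 < r) :
    ∃ n, infDist (u n) S < r ∧ dist (u n) y < infDist y S + r := by
  obtain ⟨s, hsS, hys⟩ := (infDist_lt_iff hS).1 (lt_add_of_pos_right (infDist y S) (half_pos hr))
  obtain ⟨n, hsn⟩ := hu.exists_dist_lt s (half_pos hr)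
  refine ⟨n, (infDist_le_dist_of_mem hsS).trans_lt ?_, ?_⟩
  · rw [dist_comm]; linarith
  · calc dist (u n) y ≤ dist (u n) s + dist y s := dist_triangle_right _ _ _
      _ < infDist y S + r := by rw [dist_comm]; linarith

open Classical in
noncomputable def DenseRange.selectorStep (hu : DenseRange u) {S : Set X} (hS : S.Nonempty)
    (y : X) (k : ℕ) : X :=
  u (Nat.find (hu.exists_infDist_lt_and_dist_lt hS y (pow_pos (one_half_pos (α := ℝ)) k)))

noncomputable def DenseRange.selectorSeq (hu : DenseRange u) {S : Set X} (hS : S.Nonempty) :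
    ℕ → X
  | 0 => hu.selectorStep hS (u 0) 0
  | k + 1 => hu.selectorStep hS (hu.selectorSeq hS k) (k + 1)

noncomputable def DenseRange.selector (hu : DenseRange u) {S : Set X} (hS : S.Nonempty) : X :=
  haveI : Nonempty X := ⟨u 0⟩
  limUnder atTop (hu.selectorSeq hS)

variable (hu : DenseRange u) {S : Set X} (hS : S.Nonempty)

namespace DenseRange

theorem selectorStep_spec (y : X) (k : ℕ) :
    infDist (hu.selectorStep hS y k) S < (1 / 2) ^ k ∧
      dist (hu.selectorStep hS y k) y < infDist y S + (1 / 2) ^ k := by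
  classical
  exact Nat.find_spec (hu.exists_infDist_lt_and_dist_lt hS y (pow_pos one_half_pos k))

theorem infDist_selectorSeq_lt (k : ℕ) : infDist (hu.selectorSeq hS k) S < (1 / 2) ^ k := by
  cases k with
  | zero => exact (hu.selectorStep_spec hS _ 0).1
  | succ k => exact (hu.selectorStep_spec hS _ _).1

theorem dist_selectorSeq_succ_le (k : ℕ) :
    dist (hu.selectorSeq hS k) (hu.selectorSeq hS (k + 1)) ≤ 2 * (1 / 2) ^ k := by
  have hstep := (hu.selectorStep_spec hS (hu.selectorSeq hS k) (k + 1)).2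
  have hk := hu.infDist_selectorSeq_lt hS k
  rw [dist_comm]
  simp only [selectorSeq, pow_succ] at hstep ⊢
  linarith [pow_pos (one_half_pos (α := ℝ)) k]

theorem tendsto_selectorSeq [CompleteSpace X] :
    Tendsto (hu.selectorSeq hS) atTop (𝓝 (hu.selector hS)) :=
  (cauchySeq_of_le_geometric _ _ one_half_lt_one (hu.dist_selectorSeq_succ_le hS)).tendsto_limUnder

theorem selector_mem [CompleteSpace X] (hSc : IsClosed S) : hu.selector hS ∈ S := by
  have hlim : Tendsto (fun k => infDist (hu.selectorSeq hS k) S) atTop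
      (𝓝 (infDist (hu.selector hS) S)) :=
    ((continuous_infDist_pt S).tendsto _).comp (hu.tendsto_selectorSeq hS)
  have hzero : Tendsto (fun k => infDist (hu.selectorSeq hS k) S) atTop (𝓝 0) :=
    squeeze_zero (fun _ => infDist_nonneg) (fun k => (hu.infDist_selectorSeq_lt hS k).le)
      (tendsto_pow_atTop_nhds_zero_of_lt_one one_half_pos.le one_half_lt_one)
  exact (hSc.mem_iff_infDist_zero hS).2 (tendsto_nhds_unique hlim hzero)

end DenseRange

end Metric

section Measurable

variable {α X : Type*} [MeasurableSpace α] [MetricSpace X] [SecondCountableTopology X]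
  [MeasurableSpace X] [BorelSpace X] {F : α → Set X}

theorem measurable_infDist_of_forall_measurable (hF : ∀ y, Measurable fun a => infDist y (F a))
    {g : α → X} (hg : Measurable g) : Measurable fun a => infDist (g a) (F a) := by
  have hjoint : Measurable (Function.uncurry fun y a => infDist y (F a)) :=
    measurable_uncurry_of_continuous_of_measurable (fun a => continuous_infDist_pt (F a)) hF
  exact (hjoint.comp (hg.prodMk measurable_id) :)

namespace DenseRange

variable {u : ℕ → X} (hu : DenseRange u) (hne : ∀ a, (F a).Nonempty)

theorem measurable_selectorStep (hF : ∀ y, Measurable fun a => infDist y (F a)) {g : α → X}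
    (hg : Measurable g) (k : ℕ) :
    Measurable fun a => hu.selectorStep (hne a) (g a) k := by
  classical
  refine measurable_from_nat.comp (measurable_find _ fun n => ?_)
  exact (measurableSet_lt (hF (u n)) measurable_const).inter
    (measurableSet_lt (measurable_const.dist hg)
      ((measurable_infDist_of_forall_measurable hF hg).add_const _))

theorem measurable_selectorSeq (hF : ∀ y, Measurable fun a => infDist y (F a)) (k : ℕ) :
    Measurable fun a => hu.selectorSeq (hne a) k := by
  induction k with
  | zero => exact hu.measurable_selectorStep hne hF measurable_const 0
  | succ k ih => exact hu.measurable_selectorStep hne hF ih (k + 1)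

theorem measurable_selector [CompleteSpace X]
    (hF : ∀ y, Measurable fun a => infDist y (F a)) : Measurable fun a => hu.selector (hne a) :=
  measurable_of_tendsto_metrizable (hu.measurable_selectorSeq hne hF)
    (tendsto_pi_nhds.2 fun a => hu.tendsto_selectorSeq (hne a))

end DenseRange

theorem exists_measurable_selector_of_measurable_infDist [CompleteSpace X] {u : ℕ → X}
    (hu : DenseRange u) (hne : ∀ a, (F a).Nonempty) (hclosed : ∀ a, IsClosed (F a))
    (hF : ∀ y, Measurable fun a => infDist y (F a)) :
    ∃ σ : α → X, Measurable σ ∧ (∀ a, σ a ∈ F a) ∧ ∀ a b, F a = F b → σ a = σ b :=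
  ⟨fun a => hu.selector (hne a), hu.measurable_selector hne hF,
    fun a => hu.selector_mem (hne a) (hclosed a), fun a b hab => by simp only [hab]⟩

end Measurable

theorem exists_measurable_selector_of_measurableSet_inter_nonempty {α X : Type*}
    [MeasurableSpace α] [TopologicalSpace X] [PolishSpace X] [MeasurableSpace X] [BorelSpace X]
    {F : α → Set X} (hne : ∀ a, (F a).Nonempty) (hclosed : ∀ a, IsClosed (F a))
    (hF : ∀ U, IsOpen U → MeasurableSet {a | (F a ∩ U).Nonempty}) :
    ∃ σ : α → X, Measurable σ ∧ (∀ a, σ a ∈ F a) ∧ ∀ a b, F a = F b → σ a = σ b := by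
  let := TopologicalSpace.upgradeIsCompletelyMetrizable X
  rcases isEmpty_or_nonempty α with hα | ⟨⟨a⟩⟩
  · exact ⟨isEmptyElim, measurable_of_empty _, isEmptyElim, isEmptyElim⟩
  have : Nonempty X := ⟨(hne a).some⟩
  obtain ⟨u, hu⟩ := TopologicalSpace.exists_dense_seq X
  refine exists_measurable_selector_of_measurable_infDist hu hne hclosed fun y =>
    measurable_of_Iio fun c => ?_
  have hball : (fun a => infDist y (F a)) ⁻¹' Iio c = {a | (F a ∩ ball y c).Nonempty} := by
    ext a
    simp [infDist_lt_iff (hne a), Set.Nonempty, dist_comm]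
  rw [hball]
  exact hF _ isOpen_ball

theorem isOpen_setOf_closure_orbit_inter_nonempty {G X : Type*} [Monoid G] [TopologicalSpace X]
    [MulAction G X] [ContinuousConstSMul G X] {U : Set X} (hU : IsOpen U) :
    IsOpen {x : X | (closure (orbit G x) ∩ U).Nonempty} := by
  simp_rw [closure_inter_open_nonempty_iff hU]
  have hunion : {x : X | (orbit G x ∩ U).Nonempty} = ⋃ g : G, (g • ·) ⁻¹' U := by
    ext x
    simp only [Set.Nonempty, mem_inter_iff, mem_ofPred_eq, mem_iUnion, mem_preimage, orbit,
      exists_range_iff]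
  rw [hunion]
  exact isOpen_iUnion fun g => hU.preimage (continuous_const_smul g)

/-- For a group `G` acting by isometries on a Polish metric space `X`, the quotient map onto the
space of orbit closures admits a Borel selector: there is a Borel map `σ : X → X` with
`σ x ∈ closure (G • x)` for all `x`, which is constant on the fibers of the map
`x ↦ closure (G • x)`. -/
theorem stmt_1
    (G : Type) [Group G]
    (X : Type) [MetricSpace X] [PolishSpace X] [MeasurableSpace X] [BorelSpace X]
    [MulAction G X] (hiso : ∀ g : G, Isometry (fun x : X => g • x)) :
    ∃ σ : X → X, Measurable σ ∧
      (∀ x : X, σ x ∈ closure (MulAction.orbit G x)) ∧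
      (∀ x y : X, closure (MulAction.orbit G x) = closure (MulAction.orbit G y) →
        σ x = σ y) := by
  have : ContinuousConstSMul G X := ⟨fun g => (hiso g).continuous⟩
  exact exists_measurable_selector_of_measurableSet_inter_nonempty
    (fun x => ⟨x, subset_closure (mem_orbit_self x)⟩) (fun _ => isClosed_closure)
    (fun _ hU => (isOpen_setOf_closure_orbit_inter_nonempty hU).measurableSet)
end

section
/- Let G be a Polish group acting continuously and by isometries on a Polish metric space (X,d) with d bounded. Then for all Borel measurable maps r, s : Ω → X, the infimum over all Borel measurable maps g : Ω → G of ∫ d(r(ω), g(ω)•s(ω)) dμ(ω) equals ∫ inf_{g∈G} d(r(ω), g•s(ω)) dμ(ω). (In particular, the function ω ↦ inf_{g∈G} d(r(ω), g•s(ω)) is measurable.) -/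
/-!
The integrand `F g ω = dist (r ω) (g • s ω)` is continuous in `g` and measurable in `ω`. Along a
countable dense sequence of `G` the pointwise infimum is a countable one, hence measurable; and
taking, measurably in `ω`, the first `ε`-optimal index of that sequence gives a countably-valued
measurable selection whose integral is within `ε` of the integral of the infimum.
-/

open MeasureTheory TopologicalSpace Set

theorem DenseRange.ciInf_comp {ι γ β : Type*} [TopologicalSpace γ]
    [ConditionallyCompleteLinearOrder β] [TopologicalSpace β] [ClosedIciTopology β]
    {u : ι → γ} (hu : DenseRange u) {f : γ → β} (hf : Continuous f) :
    ⨅ i, f (u i) = ⨅ g, f g := by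
  rw [← hu.ciInf' hf, iInf_range']

section Caratheodory

variable {α G : Type*} [MeasurableSpace α] [TopologicalSpace G] [Nonempty G] {F : G → α → ℝ}

theorem measurable_iInf_of_continuous_of_measurable [SeparableSpace G]
    (hF_cont : ∀ a, Continuous (F · a)) (hF_meas : ∀ g, Measurable (F g)) :
    Measurable fun a => ⨅ g, F g a := by
  simp_rw [← (denseRange_denseSeq G).ciInf_comp (hF_cont _)]
  exact .iInf fun n => hF_meas _

theorem exists_measurable_lt_iInf_add [SeparableSpace G] [MeasurableSpace G]
    (hF_cont : ∀ a, Continuous (F · a)) (hF_meas : ∀ g, Measurable (F g)) {ε : ℝ} (hε : 0 < ε) :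
    ∃ σ : α → G, Measurable σ ∧ ∀ a, F (σ a) a < (⨅ g, F g a) + ε := by
  classical
  set u := denseSeq G
  have hex : ∀ a, ∃ n, F (u n) a < (⨅ g, F g a) + ε := fun a =>
    exists_lt_of_ciInf_lt <| by
      rw [(denseRange_denseSeq G).ciInf_comp (hF_cont a)]
      exact lt_add_of_pos_right _ hε
  have hinf : Measurable fun a => ⨅ g, F g a :=
    measurable_iInf_of_continuous_of_measurable hF_cont hF_meas
  have hN : Measurable fun a => Nat.find (hex a) :=
    measurable_find hex fun n => measurableSet_lt (hF_meas _) (hinf.add_const ε)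
  exact ⟨fun a => u (Nat.find (hex a)), measurable_from_nat.comp hN, fun a => Nat.find_spec (hex a)⟩

theorem iInf_integral_eq_integral_iInf [MetrizableSpace G] [SecondCountableTopology G]
    [MeasurableSpace G] [OpensMeasurableSpace G] {μ : Measure α} [IsFiniteMeasure μ]
    (hF_cont : ∀ a, Continuous (F · a)) (hF_meas : ∀ g, Measurable (F g)) {C : ℝ}
    (hC : ∀ g a, |F g a| ≤ C) :
    ⨅ σ : {σ : α → G // Measurable σ}, ∫ a, F (σ.1 a) a ∂μ = ∫ a, ⨅ g, F g a ∂μ := by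
  have : Nonempty {σ : α → G // Measurable σ} :=
    ⟨⟨fun _ => Classical.arbitrary G, measurable_const⟩⟩
  have hbdd : ∀ a, BddBelow (range (F · a)) := fun a =>
    ⟨-C, by rintro _ ⟨g, rfl⟩; exact neg_le_of_abs_le (hC g a)⟩
  have hinf_le : ∀ a g, ⨅ g', F g' a ≤ F g a := fun a g => ciInf_le (hbdd a) g
  have hint_inf : Integrable (fun a => ⨅ g, F g a) μ := by
    have hmeas := measurable_iInf_of_continuous_of_measurable hF_cont hF_meas
    refine .of_bound hmeas.aestronglyMeasurable C (ae_of_all _ fun a => ?_)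
    rw [Real.norm_eq_abs, abs_le]
    exact ⟨le_ciInf fun g => neg_le_of_abs_le (hC g a),
      (hinf_le a _).trans (le_of_abs_le (hC (Classical.arbitrary G) a))⟩
  have hint : ∀ σ : {σ : α → G // Measurable σ}, Integrable (fun a => F (σ.1 a) a) μ := fun σ =>
    .of_bound ((measurable_uncurry_of_continuous_of_measurable hF_cont hF_meas).comp
      (σ.2.prodMk measurable_id)).aestronglyMeasurable C (ae_of_all _ fun a => hC _ a)
  have hmono : ∀ σ : {σ : α → G // Measurable σ}, ∫ a, ⨅ g, F g a ∂μ ≤ ∫ a, F (σ.1 a) a ∂μ :=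
    fun σ => integral_mono hint_inf (hint σ) fun a => hinf_le a (σ.1 a)
  have hbddI : BddBelow (range fun σ : {σ : α → G // Measurable σ} => ∫ a, F (σ.1 a) a ∂μ) :=
    ⟨_, forall_mem_range.2 hmono⟩
  refine le_antisymm (le_of_forall_pos_le_add fun ε hε => ?_) (le_ciInf hmono)
  set m := μ.real univ
  have hδ : 0 < ε / (m + 1) := by positivity
  obtain ⟨σ, hσ, hσδ⟩ := exists_measurable_lt_iInf_add hF_cont hF_meas hδ
  calc ⨅ σ : {σ : α → G // Measurable σ}, ∫ a, F (σ.1 a) a ∂μ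
      ≤ ∫ a, F (σ a) a ∂μ := ciInf_le hbddI ⟨σ, hσ⟩
    _ ≤ ∫ a, ((⨅ g, F g a) + ε / (m + 1)) ∂μ :=
        integral_mono (hint ⟨σ, hσ⟩) (hint_inf.add (integrable_const _)) fun a => (hσδ a).le
    _ = (∫ a, ⨅ g, F g a ∂μ) + m * (ε / (m + 1)) := by
        rw [integral_add hint_inf (integrable_const _), integral_const, smul_eq_mul]
    _ ≤ (∫ a, ⨅ g, F g a ∂μ) + ε := by
        have hm : 0 ≤ m := measureReal_nonneg
        gcongr
        rw [← mul_div_assoc, div_le_iff₀ (by positivity)]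
        nlinarith

end Caratheodory

theorem stmt_3_general
    (G : Type) [Group G] [TopologicalSpace G] [PolishSpace G]
    [MeasurableSpace G] [BorelSpace G]
    (X : Type) [MetricSpace X] [PolishSpace X] [BoundedSpace X]
    [MeasurableSpace X] [BorelSpace X]
    [MulAction G X] [ContinuousSMul G X]
    (r s : Ω → X) (hr : Measurable r) (hs : Measurable s) :
    Measurable (fun ω => ⨅ g : G, dist (r ω) (g • s ω)) ∧
    (⨅ g : {g : Ω → G // Measurable g}, ∫ ω, dist (r ω) ((g : Ω → G) ω • s ω) ∂volume) =
      ∫ ω, (⨅ g : G, dist (r ω) (g • s ω)) ∂volume := by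
  have hF_cont : ∀ ω, Continuous fun g : G => dist (r ω) (g • s ω) := fun ω =>
    continuous_const.dist (continuous_id.smul continuous_const)
  have hF_meas : ∀ g : G, Measurable fun ω => dist (r ω) (g • s ω) := fun g =>
    hr.dist (hs.const_smul g)
  have hC : ∀ (g : G) ω, |dist (r ω) (g • s ω)| ≤ Metric.diam (univ : Set X) := fun g ω => by
    rw [abs_of_nonneg dist_nonneg]
    exact Metric.dist_le_diam_of_mem (.all _) trivial trivial
  exact ⟨measurable_iInf_of_continuous_of_measurable hF_cont hF_meas,
    iInf_integral_eq_integral_iInf hF_cont hF_meas hC⟩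

/-- For a Polish group `G` acting continuously and isometrically on a bounded Polish metric space
`X`, and Borel random variables `r, s : Ω → X`, the distance between the orbits of `r` and `s`
under `L⁰(Ω, G)` equals the integral of the pointwise orbit distances; in particular the
pointwise orbit distance function is measurable. -/
theorem stmt_3
    (G : Type) [Group G] [TopologicalSpace G] [IsTopologicalGroup G] [PolishSpace G]
    [MeasurableSpace G] [BorelSpace G]
    (X : Type) [MetricSpace X] [PolishSpace X] [BoundedSpace X]
    [MeasurableSpace X] [BorelSpace X]
    [MulAction G X] [ContinuousSMul G X] (hiso : ∀ g : G, Isometry (fun x : X => g • x))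
    (r s : Ω → X) (hr : Measurable r) (hs : Measurable s) :
    Measurable (fun ω => ⨅ g : G, dist (r ω) (g • s ω)) ∧
    (⨅ g : {g : Ω → G // Measurable g}, ∫ ω, dist (r ω) ((g : Ω → G) ω • s ω) ∂volume) =
      ∫ ω, (⨅ g : G, dist (r ω) (g • s ω)) ∂volume :=
  stmt_3_general G X r s hr hs
end

section
/- Let S be a compact metrizable space, let H be a separable complex Hilbert space, and let β : S → B(H) be a map into the bounded operators on H such that ‖β(x)‖ ≤ 1 for all x ∈ S and such that β is continuous from S to B(H) with the weak operator topology. Let λ be a Borel probability measure on [0,1] × S × [0,1] whose marginals on the first and third coordinates both equal Lebesgue measure. Then there exists a unique bounded linear operator B_λ on the Bochner space L²([0,1], H) satisfying ⟨f₀, B_λ f₁⟩ = ∫ ⟨f₀(ω₀), β(x) f₁(ω₁)⟩ dλ(ω₀, x, ω₁) for all f₀, f₁ ∈ L²([0,1], H), and this operator satisfies ‖B_λ‖ ≤ 1. Moreover, the map λ ↦ B_λ is continuous from the weak convergence topology on such measures to the weak operator topology. -/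
/-!
The operator factors as `B_λ = J₀† M J₁`: the maps `Jᵢ : L²([0,1], H) → L²(λ, H)` compose with
the coordinate projections and are isometries because the marginals of `λ` are Lebesgue, and `M`
is the contraction of `L²(λ, H)` defined by the bounded sesquilinear form
`∫ ⟪g₀(q), β(x) g₁(q)⟫ dλ(q)`.

For continuity in `λ`: WOT-continuity of the contractions `β(x)` makes
`(u, x, v) ↦ ⟪u, β(x) v⟫` jointly continuous, so for bounded continuous `f₀, f₁` the integrand of
`⟪f₀, B_λ f₁⟫` is a bounded continuous function and the pairing is continuous for weak
convergence. The `B_λ` are uniformly bounded and such `f₀, f₁` are dense in `L²`, which extends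
continuity to all pairs.
-/

open MeasureTheory

open scoped InnerProduct

section WeakOperatorContinuity

variable {E : Type*} [NormedAddCommGroup E] [InnerProductSpace ℂ E]

lemma norm_inner_apply_le {T : E →L[ℂ] E} (hT : ‖T‖ ≤ 1) (u v : E) :
    ‖inner ℂ u (T v)‖ ≤ ‖u‖ * ‖v‖ :=
  calc ‖inner ℂ u (T v)‖ ≤ ‖u‖ * ‖T v‖ := norm_inner_le_norm _ _
    _ ≤ ‖u‖ * ‖v‖ := by gcongr; exact T.le_of_opNorm_le hT v |>.trans_eq (one_mul _)

lemma norm_inner_apply_sub_inner_apply_le {T : E →L[ℂ] E} (hT : ‖T‖ ≤ 1) (u v u' v' : E) :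
    ‖inner ℂ u (T v) - inner ℂ u' (T v')‖ ≤ ‖u - u'‖ * ‖v‖ + ‖u'‖ * ‖v - v'‖ := by
  have hsplit : inner ℂ u (T v) - inner ℂ u' (T v') =
      inner ℂ (u - u') (T v) + inner ℂ u' (T (v - v')) := by
    simp only [inner_sub_left, map_sub, inner_sub_right]; ring
  rw [hsplit]
  exact (norm_add_le _ _).trans
    (add_le_add (norm_inner_apply_le hT _ _) (norm_inner_apply_le hT _ _))

theorem continuous_inner_apply_of_dense {X : Type*} [TopologicalSpace X] {T : X → E →L[ℂ] E}
    (hT : ∀ x, ‖T x‖ ≤ 1) {D : Set E} (hD : Dense D)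
    (hcont : ∀ u ∈ D, ∀ v ∈ D, Continuous fun x => inner ℂ u (T x v)) :
    Continuous fun p : E × X × E => inner ℂ p.1 (T p.2.1 p.2.2) := by
  refine continuous_of_locally_uniform_approx_of_continuousAt fun ⟨u₀, x₀, v₀⟩ U hU => ?_
  obtain ⟨ε, hε, hεU⟩ := Metric.mem_uniformity_dist.1 hU
  set C := ‖u₀‖ + ‖v₀‖ + 2
  have hC : 0 < C := by positivity
  set δ := min 1 (ε / (4 * C))
  have hδ : 0 < δ := by positivity
  have hδε : 2 * δ * C < ε := by
    have : δ ≤ ε / (4 * C) := min_le_right _ _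
    calc 2 * δ * C ≤ 2 * (ε / (4 * C)) * C := by gcongr
      _ = ε / 2 := by field_simp; ring
      _ < ε := half_lt_self hε
  obtain ⟨u, hu, hu₀⟩ := hD.exists_dist_lt u₀ hδ
  obtain ⟨v, hv, hv₀⟩ := hD.exists_dist_lt v₀ hδ
  refine ⟨Metric.ball u₀ δ ×ˢ Set.univ ×ˢ Metric.ball v₀ δ, ?_, fun p => inner ℂ u (T p.2.1 v),
    ((hcont u hu v hv).comp (continuous_fst.comp continuous_snd)).continuousAt, ?_⟩
  · exact prod_mem_nhds (Metric.ball_mem_nhds _ hδ)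
      (prod_mem_nhds Filter.univ_mem (Metric.ball_mem_nhds _ hδ))
  rintro ⟨u', x', v'⟩ ⟨hu' : dist u' u₀ < δ, -, hv' : dist v' v₀ < δ⟩
  apply hεU
  have hδ1 : δ ≤ 1 := min_le_left _ _
  have h1 : dist u' u ≤ 2 * δ := by linarith [dist_triangle u' u₀ u]
  have h2 : dist v' v ≤ 2 * δ := by linarith [dist_triangle v' v₀ v]
  have h3 : ‖v'‖ ≤ ‖v₀‖ + 1 :=
    (norm_le_of_mem_closedBall (Metric.ball_subset_closedBall hv')).trans (by gcongr)
  have h4 : ‖u‖ ≤ ‖u₀‖ + 1 :=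
    (norm_le_of_mem_closedBall (Metric.ball_subset_closedBall (Metric.mem_ball'.2 hu₀))).trans
      (by gcongr)
  rw [dist_eq_norm] at h1 h2 ⊢
  calc _ ≤ ‖u' - u‖ * ‖v'‖ + ‖u‖ * ‖v' - v‖ :=
        norm_inner_apply_sub_inner_apply_le (hT x') _ _ _ _
    _ ≤ 2 * δ * (‖v₀‖ + 1) + (‖u₀‖ + 1) * (2 * δ) := by gcongr
    _ = 2 * δ * C := by ring
    _ < ε := hδε

end WeakOperatorContinuity

section L2

variable {X E : Type*} [MeasurableSpace X] {μ : Measure X} [NormedAddCommGroup E]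

lemma MeasureTheory.Lp.integrable_norm_mul_norm (g₀ g₁ : Lp E 2 μ) :
    Integrable (fun x => ‖g₀ x‖ * ‖g₁ x‖) μ :=
  (Lp.memLp g₀).norm.integrable_mul (Lp.memLp g₁).norm

lemma MeasureTheory.Lp.integral_norm_mul_norm_le (g₀ g₁ : Lp E 2 μ) :
    ∫ x, ‖g₀ x‖ * ‖g₁ x‖ ∂μ ≤ ‖g₀‖ * ‖g₁‖ := by
  have hnorm (g : Lp E 2 μ) : ‖(Lp.memLp g).norm.toLp‖ = ‖g‖ := by
    rw [Lp.norm_toLp, eLpNorm_norm, Lp.norm_def]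
  calc ∫ x, ‖g₀ x‖ * ‖g₁ x‖ ∂μ
      = inner ℝ (Lp.memLp g₀).norm.toLp (Lp.memLp g₁).norm.toLp := by
        rw [L2.inner_def]
        refine integral_congr_ae ?_
        filter_upwards [(Lp.memLp g₀).norm.coeFn_toLp, (Lp.memLp g₁).norm.coeFn_toLp]
          with x h₀ h₁
        simp [h₀, h₁, mul_comm]
    _ ≤ ‖g₀‖ * ‖g₁‖ := (real_inner_le_norm _ _).trans_eq (by rw [hnorm, hnorm])

end L2

section MultiplicationOperator

variable {S H X : Type*} [NormedAddCommGroup H] [InnerProductSpace ℂ H] [MeasurableSpace X]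
  {μ : Measure X} {β : S → H →L[ℂ] H} {π : X → S} (hβ : ∀ s, ‖β s‖ ≤ 1)
include hβ

lemma norm_integral_inner_apply_le (g₀ g₁ : Lp H 2 μ) :
    ‖∫ x, inner ℂ (g₀ x) (β (π x) (g₁ x)) ∂μ‖ ≤ ‖g₀‖ * ‖g₁‖ :=
  (norm_integral_le_of_norm_le (Lp.integrable_norm_mul_norm g₀ g₁)
    (ae_of_all _ fun _ => norm_inner_apply_le (hβ _) _ _)).trans
    (Lp.integral_norm_mul_norm_le g₀ g₁)

variable [TopologicalSpace S] (hF : Continuous fun p : H × S × H => inner ℂ p.1 (β p.2.1 p.2.2))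
  (hπ : AEStronglyMeasurable π μ)
include hF hπ

lemma integrable_inner_apply (g₀ g₁ : Lp H 2 μ) :
    Integrable (fun x => inner ℂ (g₀ x) (β (π x) (g₁ x))) μ :=
  (Lp.integrable_norm_mul_norm g₀ g₁).mono'
    (hF.comp_aestronglyMeasurable
      ((Lp.aestronglyMeasurable g₀).prodMk (hπ.prodMk (Lp.aestronglyMeasurable g₁))))
    (ae_of_all _ fun _ => norm_inner_apply_le (hβ _) _ _)

theorem exists_contraction_inner_eq_integral_inner_apply [CompleteSpace H] :
    ∃ M : Lp H 2 μ →L[ℂ] Lp H 2 μ, ‖M‖ ≤ 1 ∧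
      ∀ g₀ g₁ : Lp H 2 μ, inner ℂ g₀ (M g₁) = ∫ x, inner ℂ (g₀ x) (β (π x) (g₁ x)) ∂μ := by
  have hint := integrable_inner_apply hβ hF hπ
  let b : Lp H 2 μ →L⋆[ℂ] Lp H 2 μ →L[ℂ] ℂ :=
    (LinearMap.mk₂'ₛₗ (starRingEnd ℂ) (RingHom.id ℂ)
      (fun g₀ g₁ : Lp H 2 μ => ∫ x, inner ℂ (g₀ x) (β (π x) (g₁ x)) ∂μ)
      (fun g₀ g₀' g₁ => by
        rw [← integral_add (hint _ _) (hint _ _)]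
        refine integral_congr_ae ?_
        filter_upwards [Lp.coeFn_add g₀ g₀'] with x hx
        rw [hx, Pi.add_apply, inner_add_left])
      (fun c g₀ g₁ => by
        rw [smul_eq_mul, ← integral_const_mul]
        refine integral_congr_ae ?_
        filter_upwards [Lp.coeFn_smul c g₀] with x hx
        rw [hx, Pi.smul_apply, inner_smul_left])
      (fun g₀ g₁ g₁' => by
        rw [← integral_add (hint _ _) (hint _ _)]
        refine integral_congr_ae ?_
        filter_upwards [Lp.coeFn_add g₁ g₁'] with x hx
        rw [hx, Pi.add_apply, map_add, inner_add_right])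
      (fun c g₀ g₁ => by
        rw [smul_eq_mul, ← integral_const_mul]
        refine integral_congr_ae ?_
        filter_upwards [Lp.coeFn_smul c g₁] with x hx
        rw [hx, Pi.smul_apply, map_smul, inner_smul_right]; rfl)).mkContinuous₂ 1
      (fun g₀ g₁ => by simpa using norm_integral_inner_apply_le hβ g₀ g₁)
  refine ⟨(InnerProductSpace.continuousLinearMapOfBilin b)†, ?_, ?_⟩
  · rw [LinearIsometryEquiv.norm_map]
    exact (LinearIsometry.norm_toContinuousLinearMap_comp _).trans_le
      (LinearMap.mkContinuous₂_norm_le _ zero_le_one _)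
  · intro g₀ g₁
    rw [ContinuousLinearMap.adjoint_inner_right,
      InnerProductSpace.continuousLinearMapOfBilin_apply]
    rfl

end MultiplicationOperator

section Coupling

variable {S H : Type*} [TopologicalSpace S] [MeasurableSpace S] [OpensMeasurableSpace S]
  [TopologicalSpace.PseudoMetrizableSpace S] [SecondCountableTopology S]
  [NormedAddCommGroup H] [InnerProductSpace ℂ H] [CompleteSpace H] {β : S → H →L[ℂ] H}

theorem exists_contraction_inner_eq_integral_of_measurePreserving
    {Y₀ Y₁ : Type*} [MeasurableSpace Y₀] [MeasurableSpace Y₁]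
    {ν₀ : Measure Y₀} {ν₁ : Measure Y₁} {m : Measure (Y₀ × S × Y₁)}
    (hβ : ∀ s, ‖β s‖ ≤ 1) (hF : Continuous fun p : H × S × H => inner ℂ p.1 (β p.2.1 p.2.2))
    (h₀ : MeasurePreserving Prod.fst m ν₀) (h₁ : MeasurePreserving (fun q => q.2.2) m ν₁) :
    ∃ B : Lp H 2 ν₁ →L[ℂ] Lp H 2 ν₀, ‖B‖ ≤ 1 ∧ ∀ f₀ f₁,
      inner ℂ f₀ (B f₁) = ∫ q, inner ℂ (f₀ q.1) (β q.2.1 (f₁ q.2.2)) ∂m := by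
  obtain ⟨M, hM, hMB⟩ := exists_contraction_inner_eq_integral_inner_apply hβ hF
    measurable_snd.fst.aestronglyMeasurable (μ := m)
  let J₀ := (Lp.compMeasurePreservingₗᵢ (E := H) (p := 2) ℂ _ h₀).toContinuousLinearMap
  let J₁ := (Lp.compMeasurePreservingₗᵢ (E := H) (p := 2) ℂ _ h₁).toContinuousLinearMap
  refine ⟨J₀† ∘L M ∘L J₁, ?_, fun f₀ f₁ => ?_⟩
  · have hJ₀ : ‖J₀†‖ ≤ 1 := by
      rw [LinearIsometryEquiv.norm_map]
      exact LinearIsometry.norm_toContinuousLinearMap_le _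
    calc ‖J₀† ∘L M ∘L J₁‖ ≤ ‖J₀†‖ * (‖M‖ * ‖J₁‖) :=
          (J₀†.opNorm_comp_le _).trans (by gcongr; exact M.opNorm_comp_le _)
      _ ≤ 1 * (1 * 1) := by
          gcongr
          exact LinearIsometry.norm_toContinuousLinearMap_le _
      _ = 1 := by norm_num
  · rw [ContinuousLinearMap.comp_apply, ContinuousLinearMap.comp_apply,
      ContinuousLinearMap.adjoint_inner_right, hMB]
    refine integral_congr_ae ?_
    filter_upwards [Lp.coeFn_compMeasurePreserving f₀ h₀, Lp.coeFn_compMeasurePreserving f₁ h₁]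
      with q hq₀ hq₁
    exact congr_arg₂ (inner ℂ) hq₀ (congrArg (β q.2.1) hq₁)

end Coupling

lemma MeasureTheory.ProbabilityMeasure.continuous_integral_boundedContinuousFunction_rclike
    {𝕜 Y : Type*} [RCLike 𝕜] [TopologicalSpace Y] [MeasurableSpace Y] [OpensMeasurableSpace Y]
    (f : BoundedContinuousFunction Y 𝕜) :
    Continuous fun μ : ProbabilityMeasure Y => ∫ y, f y ∂μ :=
  continuous_iff_continuousAt.2 fun _ =>
    (ProbabilityMeasure.tendsto_iff_forall_integral_rclike_tendsto 𝕜).1 continuousAt_id f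

theorem stmt_12_general
    (S : Type) [TopologicalSpace S] [CompactSpace S] [TopologicalSpace.MetrizableSpace S]
    [MeasurableSpace S] [BorelSpace S]
    (H : Type) [NormedAddCommGroup H] [InnerProductSpace ℂ H] [CompleteSpace H]
    (β : S → H →L[ℂ] H) (hcontr : ∀ x : S, ‖β x‖ ≤ 1)
    (hwot : ∀ u v : H, Continuous fun x : S => (inner ℂ u ((β x) v) : ℂ)) :
    ∃ Φ : {m : ProbabilityMeasure (Ω × S × Ω) //
        Measure.map Prod.fst (m : Measure (Ω × S × Ω)) = volume ∧
        Measure.map (fun p => p.2.2) (m : Measure (Ω × S × Ω)) = volume} →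
        (Lp H 2 (volume : Measure Ω) →L[ℂ] Lp H 2 (volume : Measure Ω)),
      -- defining relation
      (∀ m, ∀ f₀ f₁ : Lp H 2 (volume : Measure Ω),
        (inner ℂ f₀ ((Φ m) f₁) : ℂ) =
          ∫ p : Ω × S × Ω, (inner ℂ (f₀ p.1) ((β p.2.1) (f₁ p.2.2)) : ℂ)
            ∂(m.1 : Measure (Ω × S × Ω))) ∧
      -- uniqueness
      (∀ m, ∀ B : Lp H 2 (volume : Measure Ω) →L[ℂ] Lp H 2 (volume : Measure Ω),
        (∀ f₀ f₁ : Lp H 2 (volume : Measure Ω),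
          (inner ℂ f₀ (B f₁) : ℂ) =
            ∫ p : Ω × S × Ω, (inner ℂ (f₀ p.1) ((β p.2.1) (f₁ p.2.2)) : ℂ)
              ∂(m.1 : Measure (Ω × S × Ω))) → B = Φ m) ∧
      -- contractivity
      (∀ m, ‖Φ m‖ ≤ 1) ∧
      -- continuity from weak convergence of measures to the weak operator topology
      (∀ f₀ f₁ : Lp H 2 (volume : Measure Ω),
        Continuous fun m => (inner ℂ f₀ ((Φ m) f₁) : ℂ)) := by
  have hF := continuous_inner_apply_of_dense hcontr dense_univ fun u _ v _ => hwot u v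
  choose Φ hΦnorm hΦ using fun m : {m : ProbabilityMeasure (Ω × S × Ω) //
      Measure.map Prod.fst (m : Measure (Ω × S × Ω)) = volume ∧
      Measure.map (fun p => p.2.2) (m : Measure (Ω × S × Ω)) = volume} =>
    exists_contraction_inner_eq_integral_of_measurePreserving hcontr hF
      ⟨measurable_fst, m.2.1⟩ ⟨measurable_snd.snd, m.2.2⟩
  refine ⟨Φ, hΦ, fun m B hB => ?_, hΦnorm, fun f₀ f₁ => ?_⟩
  · ext1 f₁
    exact ext_inner_left ℂ fun f₀ => (hB f₀ f₁).trans (hΦ m f₀ f₁).symm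
  have hD : DenseRange (BoundedContinuousFunction.toLp (E := H) 2 (volume : Measure Ω) ℂ) :=
    BoundedContinuousFunction.toLp_denseRange H volume ℂ ENNReal.ofNat_ne_top
  refine (continuous_inner_apply_of_dense hΦnorm hD ?_).comp
    (continuous_const.prodMk (continuous_id.prodMk continuous_const))
  rintro _ ⟨g₀, rfl⟩ _ ⟨g₁, rfl⟩
  have hG : Continuous fun q : Ω × S × Ω => inner ℂ (g₀ q.1) (β q.2.1 (g₁ q.2.2)) :=
    hF.comp ((g₀.continuous.comp continuous_fst).prodMk
      (continuous_snd.fst.prodMk (g₁.continuous.comp continuous_snd.snd)))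
  refine ((ProbabilityMeasure.continuous_integral_boundedContinuousFunction_rclike
    (.mkOfCompact ⟨_, hG⟩)).comp continuous_subtype_val).congr fun m => ?_
  rw [hΦ]
  refine integral_congr_ae ?_
  filter_upwards [(MeasurePreserving.mk measurable_fst m.2.1).quasiMeasurePreserving.ae
      (BoundedContinuousFunction.coeFn_toLp 2 volume ℂ g₀),
    (MeasurePreserving.mk measurable_snd.snd m.2.2).quasiMeasurePreserving.ae
      (BoundedContinuousFunction.coeFn_toLp 2 volume ℂ g₁)] with q hq₀ hq₁
  rw [hq₀, hq₁]
  rfl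

/-- Given a weak-operator-topology continuous family `β` of contractions of a separable complex
Hilbert space `H` indexed by a compact metrizable space `S`, every probability measure `m` on
`[0,1] × S × [0,1]` with Lebesgue marginals induces a unique contraction `Φ m` of the Bochner
space `L²([0,1], H)` satisfying `⟪f₀, (Φ m) f₁⟫ = ∫ ⟪f₀(ω₀), β(x) f₁(ω₁)⟫ dm(ω₀, x, ω₁)`;
moreover `m ↦ Φ m` is continuous from weak convergence of measures to the weak operator
topology. -/
theorem stmt_12
    (S : Type) [TopologicalSpace S] [CompactSpace S] [TopologicalSpace.MetrizableSpace S]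
    [MeasurableSpace S] [BorelSpace S]
    (H : Type) [NormedAddCommGroup H] [InnerProductSpace ℂ H] [CompleteSpace H]
    [SecondCountableTopology H]
    (β : S → H →L[ℂ] H) (hcontr : ∀ x : S, ‖β x‖ ≤ 1)
    (hwot : ∀ u v : H, Continuous fun x : S => (inner ℂ u ((β x) v) : ℂ)) :
    ∃ Φ : {m : ProbabilityMeasure (Ω × S × Ω) //
        Measure.map Prod.fst (m : Measure (Ω × S × Ω)) = volume ∧
        Measure.map (fun p => p.2.2) (m : Measure (Ω × S × Ω)) = volume} →
        (Lp H 2 (volume : Measure Ω) →L[ℂ] Lp H 2 (volume : Measure Ω)),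
      -- defining relation
      (∀ m, ∀ f₀ f₁ : Lp H 2 (volume : Measure Ω),
        (inner ℂ f₀ ((Φ m) f₁) : ℂ) =
          ∫ p : Ω × S × Ω, (inner ℂ (f₀ p.1) ((β p.2.1) (f₁ p.2.2)) : ℂ)
            ∂(m.1 : Measure (Ω × S × Ω))) ∧
      -- uniqueness
      (∀ m, ∀ B : Lp H 2 (volume : Measure Ω) →L[ℂ] Lp H 2 (volume : Measure Ω),
        (∀ f₀ f₁ : Lp H 2 (volume : Measure Ω),
          (inner ℂ f₀ (B f₁) : ℂ) =
            ∫ p : Ω × S × Ω, (inner ℂ (f₀ p.1) ((β p.2.1) (f₁ p.2.2)) : ℂ)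
              ∂(m.1 : Measure (Ω × S × Ω))) → B = Φ m) ∧
      -- contractivity
      (∀ m, ‖Φ m‖ ≤ 1) ∧
      -- continuity from weak convergence of measures to the weak operator topology
      (∀ f₀ f₁ : Lp H 2 (volume : Measure Ω),
        Continuous fun m => (inner ℂ f₀ ((Φ m) f₁) : ℂ)) :=
  stmt_12_general S H β hcontr hwot
end
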